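/- arXiv:2112.10400 — 3 statements merged into one kernel-verified Lean document; each statement's English description precedes it below -/
import Mathlib

section
/- Define T(γ) = E[(1/2)·max(D,γ)² + C] / E[max(D,γ)] for a nonnegative random variable D with finite second moment and E[D] > 0, and C ≥ 0. If γ* is a fixed point of T (i.e., E[(1/2)max(D,γ*)² + C] = γ*·E[max(D,γ*)]) and γ > γ*, then T(γ) − γ* ≤ γ − γ*. -/
/-!
On `{D ≤ γ}` the threshold `γ` minimises `x ↦ x² / 2 - γ x`, and elsewhere `max D γ = max D γstar`
when `γstar ≤ γ`; hence `E[max(D,γ)²/2 + C] - γ E[max(D,γ)]` is at most the same expression at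
`γstar`, which by the fixed-point equation is `(γstar - γ) E[max(D,γstar)] ≤ 0`. Dividing by
`E[max(D,γ)] ≥ E[D] > 0` gives `T(γ) ≤ γ`.
-/

open MeasureTheory

lemma half_sq_sub_mul_max_le {x a b : ℝ} (hab : a ≤ b) :
    1 / 2 * max x b ^ 2 - b * max x b ≤ 1 / 2 * max x a ^ 2 - b * max x a := by
  rcases le_or_gt x b with hxb | hbx
  · rw [max_eq_right hxb]
    nlinarith [sq_nonneg (b - max x a)]
  · rw [max_eq_left hbx.le, max_eq_left (hab.trans hbx.le)]

section Integrability

variable {Ω : Type*} [MeasurableSpace Ω] {μ : Measure Ω} [IsFiniteMeasure μ] {D : Ω → ℝ}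

lemma MeasureTheory.Integrable.max_const (hD : Integrable D μ) (c : ℝ) :
    Integrable (fun ω => max (D ω) c) μ :=
  hD.sup (integrable_const c)

lemma integrable_max_const_sq (hD : AEStronglyMeasurable D μ)
    (hD2 : Integrable (fun ω => D ω ^ 2) μ) (c : ℝ) :
    Integrable (fun ω => max (D ω) c ^ 2) μ := by
  refine (hD2.add (integrable_const (c ^ 2))).mono' ((hD.sup aestronglyMeasurable_const).pow 2) ?_
  refine ae_of_all _ fun ω => ?_
  rw [Real.norm_of_nonneg (sq_nonneg _)]
  rcases max_choice (D ω) c with h | h <;> rw [h] <;> simp [sq_nonneg]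

lemma integral_half_sq_max_add_sub_le (hD : Integrable D μ)
    (hD2 : Integrable (fun ω => D ω ^ 2) μ) (C : ℝ) {a b : ℝ} (hab : a ≤ b) :
    (∫ ω, 1 / 2 * max (D ω) b ^ 2 + C ∂μ) - b * ∫ ω, max (D ω) b ∂μ ≤
      (∫ ω, 1 / 2 * max (D ω) a ^ 2 + C ∂μ) - b * ∫ ω, max (D ω) a ∂μ := by
  have hcost (c : ℝ) : Integrable (fun ω => 1 / 2 * max (D ω) c ^ 2 + C) μ :=
    ((integrable_max_const_sq hD.1 hD2 c).const_mul _).add (integrable_const C)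
  have hlin (c : ℝ) : Integrable (fun ω => b * max (D ω) c) μ := (hD.max_const c).const_mul b
  rw [← integral_const_mul, ← integral_const_mul, ← integral_sub (hcost b) (hlin b),
    ← integral_sub (hcost a) (hlin a)]
  refine integral_mono ((hcost b).sub (hlin b)) ((hcost a).sub (hlin a)) fun ω => ?_
  have := half_sq_sub_mul_max_le (x := D ω) hab
  dsimp only
  linarith

end Integrability

theorem stmt4_general {Ω : Type*} [MeasurableSpace Ω] (μ : Measure Ω) [IsProbabilityMeasure μ]
    (D : Ω → ℝ) (C γ γstar : ℝ)
    (hD2 : Integrable (fun ω => (D ω) ^ 2) μ)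
    (hDpos : 0 < ∫ ω, D ω ∂μ)
    (hfix : ∫ ω, (1 / 2) * (max (D ω) γstar) ^ 2 + C ∂μ =
      γstar * ∫ ω, max (D ω) γstar ∂μ)
    (hγ : γstar < γ) :
    (∫ ω, (1 / 2) * (max (D ω) γ) ^ 2 + C ∂μ) / (∫ ω, max (D ω) γ ∂μ) - γstar ≤
      γ - γstar := by
  have hD : Integrable D μ := Integrable.of_integral_ne_zero hDpos.ne'
  have hmean_le (c : ℝ) : ∫ ω, D ω ∂μ ≤ ∫ ω, max (D ω) c ∂μ :=
    integral_mono hD (hD.max_const c) fun ω => le_max_left _ _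
  have hdrop := integral_half_sq_max_add_sub_le hD hD2 C hγ.le
  have hpos_star := hDpos.trans_le (hmean_le γstar)
  have hpos := hDpos.trans_le (hmean_le γ)
  rw [hfix] at hdrop
  have hcost_le : (∫ ω, 1 / 2 * max (D ω) γ ^ 2 + C ∂μ) ≤ γ * ∫ ω, max (D ω) γ ∂μ := by
    nlinarith
  linarith [(div_le_iff₀ hpos).mpr hcost_le]

theorem stmt4 {Ω : Type*} [MeasurableSpace Ω] (μ : Measure Ω) [IsProbabilityMeasure μ]
    (D : Ω → ℝ) (C γ γstar : ℝ)
    (hDmeas : Measurable D) (hDnn : ∀ᵐ ω ∂μ, 0 ≤ D ω)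
    (hD2 : Integrable (fun ω => (D ω) ^ 2) μ)
    (hDpos : 0 < ∫ ω, D ω ∂μ) (hC : 0 ≤ C)
    (hfix : ∫ ω, (1 / 2) * (max (D ω) γstar) ^ 2 + C ∂μ =
      γstar * ∫ ω, max (D ω) γstar ∂μ)
    (hγ : γstar < γ) :
    (∫ ω, (1 / 2) * (max (D ω) γ) ^ 2 + C ∂μ) / (∫ ω, max (D ω) γ ∂μ) - γstar ≤
      γ - γstar :=
  stmt4_general μ D C γ γstar hD2 hDpos hfix hγ
end

section
/- With T and γ* as in the fixed-point setup, if γ > γ* > 0 then T(γ) ≥ γ*, i.e., T(γ) − γ* ≥ 0. -/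
/-!
The map `x ↦ x ^ 2 / 2 - γ* x` is increasing on `[γ*, ∞)`, and `max D γ* ≤ max D γ` pointwise, so
`E[½ max(D,γ)² + C] - γ* E[max(D,γ)] ≥ E[½ max(D,γ*)² + C] - γ* E[max(D,γ*)]`, which vanishes by the
fixed-point equation. Dividing by `E[max(D,γ)] ≥ γ > 0` gives `T(γ) ≥ γ*`.
-/

open MeasureTheory

lemma half_sq_sub_mul_le_of_le {a x y : ℝ} (hax : a ≤ x) (hxy : x ≤ y) :
    1 / 2 * x ^ 2 - a * x ≤ 1 / 2 * y ^ 2 - a * y := by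
  nlinarith

namespace MeasureTheory

variable {Ω : Type*} [MeasurableSpace Ω] {μ : Measure Ω}

lemma MemLp.max_const [IsFiniteMeasure μ] {f : Ω → ℝ} (hf : MemLp f 2 μ) (c : ℝ) :
    MemLp (fun ω => max (f ω) c) 2 μ :=
  hf.sup (memLp_const c)

lemma integral_half_sq_add_const_sub_mul_le [IsFiniteMeasure μ] {f g : Ω → ℝ}
    (hf : MemLp f 2 μ) (hg : MemLp g 2 μ) {a : ℝ} (haf : ∀ ω, a ≤ f ω) (hfg : ∀ ω, f ω ≤ g ω)
    (C : ℝ) :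
    (∫ ω, 1 / 2 * f ω ^ 2 + C ∂μ) - a * ∫ ω, f ω ∂μ ≤
      (∫ ω, 1 / 2 * g ω ^ 2 + C ∂μ) - a * ∫ ω, g ω ∂μ := by
  have hf2 : Integrable (fun ω => 1 / 2 * f ω ^ 2 + C) μ :=
    (hf.integrable_sq.const_mul _).add (integrable_const C)
  have hg2 : Integrable (fun ω => 1 / 2 * g ω ^ 2 + C) μ :=
    (hg.integrable_sq.const_mul _).add (integrable_const C)
  have hf1 := (hf.integrable one_le_two).const_mul a
  have hg1 := (hg.integrable one_le_two).const_mul a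
  rw [← integral_const_mul, ← integral_const_mul, ← integral_sub hf2 hf1, ← integral_sub hg2 hg1]
  refine integral_mono (hf2.sub hf1) (hg2.sub hg1) fun ω => ?_
  linarith [half_sq_sub_mul_le_of_le (haf ω) (hfg ω)]

end MeasureTheory

theorem stmt5_general {Ω : Type*} [MeasurableSpace Ω] (μ : Measure Ω) [IsProbabilityMeasure μ]
    (D : Ω → ℝ) (C γ γstar : ℝ)
    (hDmeas : Measurable D)
    (hD2 : Integrable (fun ω => (D ω) ^ 2) μ)
    (hfix : ∫ ω, (1 / 2) * (max (D ω) γstar) ^ 2 + C ∂μ =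
      γstar * ∫ ω, max (D ω) γstar ∂μ)
    (hγstar : 0 < γstar) (hγ : γstar < γ) :
    0 ≤ (∫ ω, (1 / 2) * (max (D ω) γ) ^ 2 + C ∂μ) / (∫ ω, max (D ω) γ ∂μ) - γstar := by
  have hD : MemLp D 2 μ := (memLp_two_iff_integrable_sq hDmeas.aestronglyMeasurable).2 hD2
  have hcompare := integral_half_sq_add_const_sub_mul_le (hD.max_const γstar) (hD.max_const γ)
    (fun ω => le_max_right (D ω) γstar) (fun ω => max_le_max le_rfl hγ.le) C
  have hdenom : γ ≤ ∫ ω, max (D ω) γ ∂μ := by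
    simpa using integral_mono (integrable_const γ) ((hD.max_const γ).integrable one_le_two)
      fun ω => le_max_right (D ω) γ
  rw [sub_nonneg, le_div_iff₀ (by linarith)]
  linarith

theorem stmt5 {Ω : Type*} [MeasurableSpace Ω] (μ : Measure Ω) [IsProbabilityMeasure μ]
    (D : Ω → ℝ) (C γ γstar : ℝ)
    (hDmeas : Measurable D) (hDnn : ∀ᵐ ω ∂μ, 0 ≤ D ω)
    (hD2 : Integrable (fun ω => (D ω) ^ 2) μ)
    (hDpos : 0 < ∫ ω, D ω ∂μ) (hC : 0 ≤ C)
    (hfix : ∫ ω, (1 / 2) * (max (D ω) γstar) ^ 2 + C ∂μ =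
      γstar * ∫ ω, max (D ω) γstar ∂μ)
    (hγstar : 0 < γstar) (hγ : γstar < γ) :
    0 ≤ (∫ ω, (1 / 2) * (max (D ω) γ) ^ 2 + C ∂μ) / (∫ ω, max (D ω) γ ∂μ) - γstar :=
  stmt5_general μ D C γ γstar hDmeas hD2 hfix hγstar hγ
end

section
/- With D, C, γ* as in the drift setup and D̄ := E[D] > 0, for any γ ∈ ℝ the product (γ − γ*)·E[(1/2)max(D,γ)² + C − γ·max(D,γ)] ≤ −(γ − γ*)²·D̄. (The inequality holds in both cases γ ≥ γ* and γ ≤ γ*.) -/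
/-!
The map `x ↦ x² / 2 - a x` is minimised at `x = a`, so `max d a` beats `max d b` for it
whenever `b ≤ a`. Integrating, the drift `E[max(D, γ)² / 2 + C - γ max(D, γ)]` is at most
`(γ* - γ) E[max(D, γ*)]` when `γ* ≤ γ` (using the fixed-point equation for `γ*`), and at least
`(γ* - γ) E[max(D, γ)]` when `γ ≤ γ*`. Multiplying by `γ - γ*` and using
`E[max(D, c)] ≥ E[D]` gives the claim in both cases.
-/

open MeasureTheory

lemma half_sq_max_sub_mul_max_le (d : ℝ) {a b : ℝ} (h : b ≤ a) :
    (1 / 2) * max d a ^ 2 - a * max d a ≤ (1 / 2) * max d b ^ 2 - a * max d b := by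
  rcases le_total d a with hda | had
  · rw [max_eq_right hda]
    nlinarith [sq_nonneg (max d b - a)]
  · rw [max_eq_left had, max_eq_left (h.trans had)]

section Drift

variable {Ω : Type*} [MeasurableSpace Ω] {μ : Measure Ω} [IsFiniteMeasure μ] {D : Ω → ℝ}

lemma integrable_max_const (hD : MemLp D 2 μ) (c : ℝ) :
    Integrable (fun ω => max (D ω) c) μ :=
  (hD.sup (memLp_const c)).integrable one_le_two

lemma integrable_half_sq_max_const_add (hD : MemLp D 2 μ) (c C : ℝ) :
    Integrable (fun ω => (1 / 2) * max (D ω) c ^ 2 + C) μ :=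
  ((hD.sup (memLp_const c)).integrable_sq.const_mul _).add (integrable_const C)

lemma integrable_drift (hD : MemLp D 2 μ) (a c C : ℝ) :
    Integrable (fun ω => (1 / 2) * max (D ω) c ^ 2 + C - a * max (D ω) c) μ :=
  (integrable_half_sq_max_const_add hD c C).sub ((integrable_max_const hD c).const_mul a)

lemma integral_drift_eq (hD : MemLp D 2 μ) (a c C : ℝ) :
    ∫ ω, (1 / 2) * max (D ω) c ^ 2 + C - a * max (D ω) c ∂μ =
      (∫ ω, (1 / 2) * max (D ω) c ^ 2 + C ∂μ) - a * ∫ ω, max (D ω) c ∂μ := by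
  rw [integral_sub (integrable_half_sq_max_const_add hD c C)
    ((integrable_max_const hD c).const_mul a), integral_const_mul]

lemma integral_drift_le_of_le (hD : MemLp D 2 μ) (C : ℝ) {a b : ℝ} (h : b ≤ a) :
    ∫ ω, (1 / 2) * max (D ω) a ^ 2 + C - a * max (D ω) a ∂μ ≤
      ∫ ω, (1 / 2) * max (D ω) b ^ 2 + C - a * max (D ω) b ∂μ :=
  integral_mono (integrable_drift hD a a C) (integrable_drift hD a b C) fun ω => by
    linarith [half_sq_max_sub_mul_max_le (D ω) h]

lemma integral_le_integral_max (hD : MemLp D 2 μ) (c : ℝ) :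
    ∫ ω, D ω ∂μ ≤ ∫ ω, max (D ω) c ∂μ :=
  integral_mono (hD.integrable one_le_two) (integrable_max_const hD c) fun _ => le_max_left _ _

variable {C γ γstar : ℝ}

lemma integral_drift_le_of_fixedPoint_le
    (hfix : ∫ ω, (1 / 2) * max (D ω) γstar ^ 2 + C ∂μ = γstar * ∫ ω, max (D ω) γstar ∂μ)
    (hD : MemLp D 2 μ) (h : γstar ≤ γ) :
    ∫ ω, (1 / 2) * max (D ω) γ ^ 2 + C - γ * max (D ω) γ ∂μ ≤
      (γstar - γ) * ∫ ω, max (D ω) γstar ∂μ := by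
  have hmono := integral_drift_le_of_le hD C h
  rw [integral_drift_eq hD γ γstar C, hfix] at hmono
  linarith

lemma le_integral_drift_of_le_fixedPoint
    (hfix : ∫ ω, (1 / 2) * max (D ω) γstar ^ 2 + C ∂μ = γstar * ∫ ω, max (D ω) γstar ∂μ)
    (hD : MemLp D 2 μ) (h : γ ≤ γstar) :
    (γstar - γ) * ∫ ω, max (D ω) γ ∂μ ≤
      ∫ ω, (1 / 2) * max (D ω) γ ^ 2 + C - γ * max (D ω) γ ∂μ := by
  have hmono := integral_drift_le_of_le hD C h
  rw [integral_drift_eq hD γstar γstar C, integral_drift_eq hD γstar γ C, hfix] at hmono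
  rw [integral_drift_eq hD γ γ C]
  linarith

end Drift

theorem stmt17_general {Ω : Type*} [MeasurableSpace Ω] (μ : Measure Ω) [IsProbabilityMeasure μ]
    (D : Ω → ℝ) (C γ γstar : ℝ)
    (hDmeas : Measurable D)
    (hD2 : Integrable (fun ω => (D ω) ^ 2) μ)
    (hfix : ∫ ω, (1 / 2) * (max (D ω) γstar) ^ 2 + C ∂μ =
      γstar * ∫ ω, max (D ω) γstar ∂μ) :
    (γ - γstar) * ∫ ω, (1 / 2) * (max (D ω) γ) ^ 2 + C - γ * max (D ω) γ ∂μ ≤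
      -((γ - γstar) ^ 2 * ∫ ω, D ω ∂μ) := by
  have hD : MemLp D 2 μ := (memLp_two_iff_integrable_sq hDmeas.aestronglyMeasurable).mpr hD2
  rcases le_total γstar γ with h | h
  · have hdrift := integral_drift_le_of_fixedPoint_le hfix hD h
    have hmean := integral_le_integral_max hD γstar
    nlinarith [mul_le_mul_of_nonneg_left hdrift (sub_nonneg.mpr h),
      mul_le_mul_of_nonneg_left hmean (sq_nonneg (γ - γstar))]
  · have hdrift := le_integral_drift_of_le_fixedPoint hfix hD h
    have hmean := integral_le_integral_max hD γ
    nlinarith [mul_le_mul_of_nonpos_left hdrift (sub_nonpos.mpr h),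
      mul_le_mul_of_nonneg_left hmean (sq_nonneg (γ - γstar))]

theorem stmt17 {Ω : Type*} [MeasurableSpace Ω] (μ : Measure Ω) [IsProbabilityMeasure μ]
    (D : Ω → ℝ) (C γ γstar : ℝ)
    (hDmeas : Measurable D) (hDnn : ∀ᵐ ω ∂μ, 0 ≤ D ω)
    (hD2 : Integrable (fun ω => (D ω) ^ 2) μ)
    (hDpos : 0 < ∫ ω, D ω ∂μ) (hC : 0 ≤ C)
    (hfix : ∫ ω, (1 / 2) * (max (D ω) γstar) ^ 2 + C ∂μ =
      γstar * ∫ ω, max (D ω) γstar ∂μ) :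
    (γ - γstar) * ∫ ω, (1 / 2) * (max (D ω) γ) ^ 2 + C - γ * max (D ω) γ ∂μ ≤
      -((γ - γstar) ^ 2 * ∫ ω, D ω ∂μ) :=
  stmt17_general μ D C γ γstar hDmeas hD2 hfix
end
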